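/- arXiv:1410.1156 — 4 statements merged into one kernel-verified Lean document; each statement's English description precedes it below -/
import Mathlib

section
/- (Schoen's version of the Balog–Szemerédi–Gowers theorem.) There exist absolute constants c > 0 and C > 0 such that the following holds: for every abelian group G, every finite nonempty subset A ⊆ G, and every K ≥ 1, if the additive energy satisfies E⁺(A) ≥ |A|³/K, then there exists a subset A' ⊆ A with |A'| ≥ c·|A|/K and |A' − A'| ≤ C·K⁴·|A'|. -/
open Finset Pointwise

/-!
Write `r x = #{(a, b) ∈ A × A | a - b = x}` (this is `A.addConvolution (-A) x`), so that
`∑ r = |A|²` and `∑ r² = E(A) ≥ |A|³/K`, and call `x` unpopular if `r x < |A|/(32K)`.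
Counting the triples `(s, a, c)` with `a, c ∈ A ∩ (A + s)` and `a - c` unpopular shows that their
total number is at most `|A|³/(32K)`; comparing sums, some shift `s` gives `S = A ∩ (A + s)` with
`|S| > |A|/(2K)` and at most `|S|²/8` pairs of `S` with unpopular difference. Discarding the
elements of `S` that lie in more than `|S|/4` such pairs leaves `A'`, `|A'| ≥ |S|/2`, in which any
`a, b` have at least `|S|/2` common `c ∈ S` with `a - c` and `b - c` both popular. Each such `c`
writes `a - b = (a - c) - (b - c)` and contributes `r (a - c) * r (b - c) ≥ (|A|/(32K))²` to the
weight of the fibre of `a - b` in `∑_{u, v} r u * r v = |A|⁴`; hence `|A' - A'| ≤ 2¹⁴ K⁴ |A'|`.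
-/

namespace Finset

lemma exists_large_subset_pairwise_many_common_good {α : Type*} [DecidableEq α] (S : Finset α)
    (R : α → α → Prop) [DecidableRel R] (h : 8 * #{p ∈ S ×ˢ S | R p.1 p.2} ≤ #S ^ 2) :
    ∃ S' ⊆ S, #S ≤ 2 * #S' ∧ ∀ a ∈ S', ∀ b ∈ S', #S ≤ 2 * #{c ∈ S | ¬R a c ∧ ¬R b c} := by
  set deg : α → ℕ := fun a => #{c ∈ S | R a c}
  have hdeg : #{p ∈ S ×ˢ S | R p.1 p.2} = ∑ a ∈ S, deg a := by
    simp only [deg, card_filter, sum_product]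
  refine ⟨{a ∈ S | 4 * deg a ≤ #S}, filter_subset _ _, ?_, fun a ha b hb => ?_⟩
  · have hhigh : #{a ∈ S | ¬4 * deg a ≤ #S} * #S ≤ 4 * ∑ a ∈ S, deg a := by
      rw [mul_sum]
      exact (card_nsmul_le_sum _ _ _ fun a ha => (not_le.1 (mem_filter.1 ha).2).le).trans
        (sum_le_sum_of_subset (filter_subset _ _))
    have := card_filter_add_card_filter_not (s := S) (fun a => 4 * deg a ≤ #S)
    rcases (#S).eq_zero_or_pos with h0 | h0
    · omega
    · have : 2 * #{a ∈ S | ¬4 * deg a ≤ #S} ≤ #S :=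
        Nat.le_of_mul_le_mul_right (by nlinarith) h0
      omega
  · have hcover : S ⊆ {c ∈ S | ¬R a c ∧ ¬R b c} ∪ ({c ∈ S | R a c} ∪ {c ∈ S | R b c}) := by
      intro c hc
      simp only [mem_union, mem_filter]
      tauto
    have := (card_le_card hcover).trans <|
      (card_union_le _ _).trans (add_le_add_right (card_union_le _ _) _)
    have ha' : 4 * #{c ∈ S | R a c} ≤ #S := (mem_filter.1 ha).2
    have hb' : 4 * #{c ∈ S | R b c} ≤ #S := (mem_filter.1 hb).2
    omega

lemma card_nsmul_le_sum_of_le_sum_fiberwise {ι κ N : Type*} [DecidableEq κ] [AddCommMonoid N]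
    [PartialOrder N] [IsOrderedAddMonoid N] {s : Finset ι} {t : Finset κ} (g : ι → κ) {f : ι → N}
    {w : N} (hf : ∀ i ∈ s, 0 ≤ f i) (hw : ∀ y ∈ t, w ≤ ∑ i ∈ s with g i = y, f i) :
    #t • w ≤ ∑ i ∈ s, f i :=
  (card_nsmul_le_sum t _ w hw).trans <| sum_fiberwise_le_sum_of_sum_fiber_nonneg fun _ _ =>
    sum_nonneg fun i hi => hf i (mem_filter.1 hi).1

variable {G : Type*} [AddCommGroup G] [DecidableEq G]

lemma card_filter_add_eq_add_eq_sum_sq_addConvolution_neg (A : Finset G) :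
    #{t ∈ A ×ˢ A ×ˢ A ×ˢ A | t.1 + t.2.1 = t.2.2.1 + t.2.2.2} =
      ∑ s ∈ A - A, A.addConvolution (-A) s ^ 2 := by
  calc _ = A.addEnergy (-A) := by
        refine card_nbij' (fun t => ((t.1, t.2.2.1), -t.2.2.2, -t.2.1))
          (fun x => (x.1.1, -x.2.2, x.1.2, -x.2.1)) ?_ ?_ ?_ ?_ <;> intro t <;>
          simp only [coe_filter, mem_product, Set.mem_ofPred_eq, mem_neg', neg_neg] <;> grind
    _ = _ := by rw [addEnergy_eq_sum_sq', ← sub_eq_add_neg]; rfl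

lemma sum_addConvolution_neg (A B : Finset G) :
    ∑ s ∈ A - B, A.addConvolution (-B) s = #A * #B := by
  simp_rw [← card_sub_eq]
  rw [sum_card_fiberwise_eq_card_filter, filter_true_of_mem, card_product]
  rintro ⟨a, b⟩ h
  exact sub_mem_sub (mem_product.1 h).1 (mem_product.1 h).2

lemma card_filter_mem_vadd_and_mem_vadd {A : Finset G} {a : G} (c : G) (ha : a ∈ A) :
    #{s ∈ A - A | a ∈ s +ᵥ A ∧ c ∈ s +ᵥ A} = A.addConvolution (-A) (a - c) := by
  rw [← card_inter_vadd]
  refine card_nbij' (fun s => a - s) (fun x => a - x) ?_ ?_ ?_ ?_ <;> intro s <;>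
    simp only [coe_filter, mem_coe, Set.mem_ofPred_eq, mem_inter, ← neg_vadd_mem_iff, vadd_eq_add]
  · rintro ⟨-, h1, h2⟩
    exact ⟨by rwa [sub_eq_add_neg, add_comm], by convert h2 using 1; abel⟩
  · rintro ⟨h1, h2⟩
    exact ⟨sub_mem_sub ha h1, by rwa [neg_sub, sub_add_cancel], by convert h2 using 1; abel⟩
  · simp
  · simp

lemma sum_card_filter_inter_vadd_product (A : Finset G) (P : G → Prop) [DecidablePred P] :
    ∑ s ∈ A - A, #{p ∈ (A ∩ (s +ᵥ A)) ×ˢ (A ∩ (s +ᵥ A)) | P (p.1 - p.2)} =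
      ∑ p ∈ A ×ˢ A with P (p.1 - p.2), A.addConvolution (-A) (p.1 - p.2) := by
  simp_rw [card_eq_sum_ones]
  rw [sum_comm' (t' := {p ∈ A ×ˢ A | P (p.1 - p.2)})
    (s' := fun p => {s ∈ A - A | p.1 ∈ s +ᵥ A ∧ p.2 ∈ s +ᵥ A})]
  · refine sum_congr rfl fun p hp => ?_
    rw [← card_eq_sum_ones,
      card_filter_mem_vadd_and_mem_vadd _ (mem_product.1 (mem_filter.1 hp).1).1]
  · intro s p
    simp only [mem_filter, mem_product, mem_inter]
    tauto

lemma sum_card_filter_addConvolution_lt_le (A : Finset G) {θ : ℝ} (hθ : 0 ≤ θ) :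
    ∑ s ∈ A - A, (#{p ∈ (A ∩ (s +ᵥ A)) ×ˢ (A ∩ (s +ᵥ A)) |
      (A.addConvolution (-A) (p.1 - p.2) : ℝ) < θ} : ℝ) ≤ #A ^ 2 * θ := by
  rw [← Nat.cast_sum,
    sum_card_filter_inter_vadd_product A fun x => (A.addConvolution (-A) x : ℝ) < θ, Nat.cast_sum]
  calc _ ≤ ∑ p ∈ A ×ˢ A with (A.addConvolution (-A) (p.1 - p.2) : ℝ) < θ, θ :=
        sum_le_sum fun p hp => (mem_filter.1 hp).2.le
    _ ≤ #A ^ 2 * θ := by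
        rw [sum_const, nsmul_eq_mul, sq, ← Nat.cast_mul, ← card_product]
        gcongr
        exact filter_subset _ _

lemma exists_large_subset_few_unpopular_pairs (A : Finset G) {K : ℝ} (hK : 0 < K)
    (hA : A.Nonempty) (hE : #A ^ 3 / K ≤ ∑ s ∈ A - A, (A.addConvolution (-A) s : ℝ) ^ 2) :
    ∃ S ⊆ A, #A / (2 * K) < #S ∧
      8 * #{p ∈ S ×ˢ S | (A.addConvolution (-A) (p.1 - p.2) : ℝ) < #A / (32 * K)} ≤ #S ^ 2 := by
  have hsum : ∑ s ∈ A - A, (A.addConvolution (-A) s : ℝ) = #A ^ 2 := by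
    rw [sq]; exact_mod_cast sum_addConvolution_neg A A
  set n : ℝ := (#A : ℝ)
  have hn : 0 < n := by positivity
  have hunpop := sum_card_filter_addConvolution_lt_le A (θ := n / (32 * K)) (by positivity)
  have hpos : ∑ s ∈ A - A, (0 : ℝ) < ∑ s ∈ A - A, ((#(A ∩ (s +ᵥ A)) : ℝ) ^ 2 -
      8 * #{p ∈ (A ∩ (s +ᵥ A)) ×ˢ (A ∩ (s +ᵥ A)) |
        (A.addConvolution (-A) (p.1 - p.2) : ℝ) < n / (32 * K)} -
      n / (2 * K) * #(A ∩ (s +ᵥ A))) := by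
    simp only [card_inter_vadd, sum_const_zero, sum_sub_distrib, ← mul_sum, hsum]
    have : n ^ 3 / K - 8 * (n ^ 2 * (n / (32 * K))) - n / (2 * K) * n ^ 2 = n ^ 3 / (4 * K) := by
      field_simp; ring
    have : 0 < n ^ 3 / (4 * K) := by positivity
    linarith
  obtain ⟨s, -, hs⟩ := exists_lt_of_sum_lt hpos
  refine ⟨A ∩ (s +ᵥ A), inter_subset_left, ?_, ?_⟩
  · by_contra! h
    nlinarith [mul_le_mul_of_nonneg_left h (Nat.cast_nonneg (#(A ∩ (s +ᵥ A))))]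
  · have : 0 ≤ n / (2 * K) * #(A ∩ (s +ᵥ A)) := by positivity
    exact_mod_cast (by linarith : (8 * #{p ∈ (A ∩ (s +ᵥ A)) ×ˢ (A ∩ (s +ᵥ A)) |
        (A.addConvolution (-A) (p.1 - p.2) : ℝ) < n / (32 * K)} : ℝ) ≤ #(A ∩ (s +ᵥ A)) ^ 2)

lemma card_mul_sq_le_sum_filter_sub_eq {A C : Finset G} {a b : G} (ha : a ∈ A) (hb : b ∈ A)
    (hC : C ⊆ A) {θ : ℝ} (hθ : 0 ≤ θ)
    (hpop : ∀ c ∈ C, θ ≤ A.addConvolution (-A) (a - c) ∧ θ ≤ A.addConvolution (-A) (b - c)) :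
    #C * θ ^ 2 ≤ ∑ p ∈ (A - A) ×ˢ (A - A) with p.1 - p.2 = a - b,
      (A.addConvolution (-A) p.1 : ℝ) * A.addConvolution (-A) p.2 := by
  have hinj : Set.InjOn (fun c => (a - c, b - c)) C := fun c _ c' _ h =>
    sub_right_injective (congrArg Prod.fst h)
  calc #C * θ ^ 2 = ∑ c ∈ C, θ * θ := by rw [sum_const, nsmul_eq_mul, sq]
    _ ≤ ∑ c ∈ C, (A.addConvolution (-A) (a - c) : ℝ) * A.addConvolution (-A) (b - c) :=
        sum_le_sum fun c hc => mul_le_mul (hpop c hc).1 (hpop c hc).2 hθ (Nat.cast_nonneg _)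
    _ = ∑ p ∈ C.image fun c => (a - c, b - c),
          (A.addConvolution (-A) p.1 : ℝ) * A.addConvolution (-A) p.2 := by rw [sum_image hinj]
    _ ≤ _ := by
        refine sum_le_sum_of_subset_of_nonneg ?_ fun _ _ _ => by positivity
        simp only [subset_iff, mem_image, mem_filter, mem_product]
        rintro _ ⟨c, hc, rfl⟩
        exact ⟨⟨sub_mem_sub ha (hC hc), sub_mem_sub hb (hC hc)⟩, sub_sub_sub_cancel_right a b c⟩

lemma card_sub_mul_le_card_pow_four {A S A' : Finset G} (hS : S ⊆ A) (hA' : A' ⊆ A) {θ : ℝ} (hθ : 0 ≤ θ)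
    (hcommon : ∀ a ∈ A', ∀ b ∈ A', #S ≤ 2 * #{c ∈ S | ¬(A.addConvolution (-A) (a - c) : ℝ) < θ ∧
      ¬(A.addConvolution (-A) (b - c) : ℝ) < θ}) :
    #(A' - A') * (#S / 2 * θ ^ 2) ≤ (#A : ℝ) ^ 4 := by
  have htotal : ∑ p ∈ (A - A) ×ˢ (A - A),
      (A.addConvolution (-A) p.1 : ℝ) * A.addConvolution (-A) p.2 = #A ^ 4 := by
    simp_rw [sum_product, ← sum_mul_sum]
    rw [← Nat.cast_sum, sum_addConvolution_neg]
    push_cast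
    ring
  rw [← htotal, ← nsmul_eq_mul]
  refine card_nsmul_le_sum_of_le_sum_fiberwise (fun p => p.1 - p.2)
    (fun _ _ => by positivity) fun d hd => ?_
  obtain ⟨a, ha, b, hb, rfl⟩ := mem_sub.1 hd
  calc #S / 2 * θ ^ 2 ≤ #{c ∈ S | ¬(A.addConvolution (-A) (a - c) : ℝ) < θ ∧
        ¬(A.addConvolution (-A) (b - c) : ℝ) < θ} * θ ^ 2 := by
        gcongr
        rw [div_le_iff₀ two_pos, mul_comm]
        exact_mod_cast hcommon a ha b hb
    _ ≤ _ := card_mul_sq_le_sum_filter_sub_eq (hA' ha) (hA' hb) ((filter_subset _ _).trans hS) hθ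
        fun c hc => by simpa only [not_lt] using (mem_filter.1 hc).2

end Finset

theorem stmt11 :
    ∃ c > (0:ℝ), ∃ C > (0:ℝ),
      ∀ (G : Type) [inst : AddCommGroup G] [instD : DecidableEq G]
        (A : Finset G) (K : ℝ),
        A.Nonempty → 1 ≤ K →
        (A.card : ℝ) ^ 3 / K ≤
          (((A ×ˢ A ×ˢ A ×ˢ A).filter
            fun t => t.1 + t.2.1 = t.2.2.1 + t.2.2.2).card : ℝ) →
        ∃ A' ⊆ A, c * (A.card : ℝ) / K ≤ (A'.card : ℝ) ∧
          ((A' - A').card : ℝ) ≤ C * K ^ 4 * (A'.card : ℝ) := by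
  refine ⟨1 / 4, by norm_num, 2 ^ 14, by norm_num, fun G _ _ A K hA hK hE => ?_⟩
  have hK0 : 0 < K := by linarith
  rw [card_filter_add_eq_add_eq_sum_sq_addConvolution_neg] at hE
  push_cast at hE
  obtain ⟨S, hSA, hS, hfew⟩ := exists_large_subset_few_unpopular_pairs A hK0 hA hE
  obtain ⟨A', hA'S, hA', hcommon⟩ := exists_large_subset_pairwise_many_common_good S
    (fun a c => (A.addConvolution (-A) (a - c) : ℝ) < #A / (32 * K)) hfew
  have hdiff := card_sub_mul_le_card_pow_four hSA (hA'S.trans hSA) (by positivity) hcommon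
  have hA'R : (#S : ℝ) ≤ 2 * #A' := by exact_mod_cast hA'
  refine ⟨A', hA'S.trans hSA,
    by linarith [show 1 / 4 * (#A : ℝ) / K = #A / (2 * K) / 2 by ring], ?_⟩
  have hnA : (0 : ℝ) < #A := by exact_mod_cast hA.card_pos
  have hnS : (#A : ℝ) < 2 * K * #S := by rwa [div_lt_iff₀ (by positivity), mul_comm] at hS
  have hSpos : (0 : ℝ) < #S := by linarith [div_pos hnA (by positivity : (0 : ℝ) < 2 * K)]
  have h1 : ((A' - A').card : ℝ) * #S ≤ 2048 * K ^ 2 * #A ^ 2 := by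
    rw [show ((A' - A').card : ℝ) * (#S / 2 * (#A / (32 * K)) ^ 2) =
      (A' - A').card * #S * #A ^ 2 / (2048 * K ^ 2) by field_simp; ring,
      div_le_iff₀ (by positivity)] at hdiff
    exact le_of_mul_le_mul_right (by linarith : _ ≤ 2048 * K ^ 2 * #A ^ 2 * #A ^ 2)
      (by positivity : (0 : ℝ) < #A ^ 2)
  have h2 : (#A : ℝ) ^ 2 ≤ 2 * K * #S * (4 * K * #A') := by
    rw [sq]
    exact mul_le_mul hnS.le (by linarith [mul_le_mul_of_nonneg_left hA'R hK0.le]) hnA.le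
      (by positivity)
  refine le_of_mul_le_mul_right ?_ hSpos
  nlinarith
end

section
/- There exists an absolute constant c > 0 such that the following holds: for all finite sets A, B, C of real numbers with A ≠ {0}, A nonempty, and B+C nonempty and not equal to {0}, one has |A(B+C)| ≥ c·(|A|·|B|·|C|)^{1/2}. -/
/-!
Discard `0` from `A` and write `P = A(B+C)`. Every `(a, b) ∈ A × B` gives the line
`x ↦ a(b + x)`, and for consecutive elements `c < c'` of `C` the values at `c` and `c'` are
`#A #B` distinct points of `P × P`. Two lines that form an inversion among these points cross
between `c` and `c'`, and two lines cross at most once, so the inversion counts of the `#C - 1`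
consecutive pairs add up to at most `(#A #B)²`. On the other hand, a crossing-lemma argument shows
that `m ≥ 4 #P` points of `P × P` have at least `m³ / (32 #P²)` inversions: a set without
inversions is a chain, hence has at most `2 #P` points, and sampling both coordinates
independently with probability `4 #P / m` amplifies this. Comparing gives `#A #B #C ≲ #P²`.
-/

open Finset Pointwise

section Cardinality

variable {α : Type*}

lemma card_le_two_mul_card_erase [DecidableEq α] {s : Finset α} {a : α}
    (h : s ≠ {a}) : #s ≤ 2 * #(s.erase a) := by
  by_cases ha : a ∈ s
  · have hne : (s.erase a).Nonempty := nonempty_iff_ne_empty.2 fun h' =>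
      ((erase_eq_empty_iff _ _).1 h').elim (fun h₀ => by simp [h₀] at ha) h
    have := card_erase_add_one ha
    have := hne.card_pos
    omega
  · rw [erase_eq_of_notMem ha]
    omega

variable [LinearOrder α]

lemma card_filter_lt_le_card_filter_lt (s : Finset α) {a b : α} (hab : a ≤ b) :
    #{x ∈ s | x < a} ≤ #{x ∈ s | x < b} :=
  card_le_card (monotone_filter_right s fun _ _ hx => hx.trans_le hab)

lemma card_filter_lt_lt_card_filter_lt {s : Finset α} {a b : α} (ha : a ∈ s) (hab : a < b) :
    #{x ∈ s | x < a} < #{x ∈ s | x < b} :=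
  card_lt_card <| (ssubset_iff_of_subset (monotone_filter_right s fun _ _ hx => hx.trans hab)).2
    ⟨a, mem_filter.2 ⟨ha, hab⟩, fun h => lt_irrefl a (mem_filter.1 h).2⟩

lemma card_filter_lt_lt_card {s : Finset α} {a : α} (ha : a ∈ s) : #{x ∈ s | x < a} < #s :=
  card_lt_card <| filter_ssubset.2 ⟨a, ha, lt_irrefl a⟩

end Cardinality

section Inversions

variable {α β : Type*} [LinearOrder α] [LinearOrder β]

def inversions (E : Finset (α × β)) : Finset ((α × β) × (α × β)) :=
  {q ∈ E ×ˢ E | q.1.1 < q.2.1 ∧ q.2.2 < q.1.2}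

lemma mem_inversions {E : Finset (α × β)} {q : (α × β) × (α × β)} :
    q ∈ inversions E ↔ (q.1 ∈ E ∧ q.2 ∈ E) ∧ q.1.1 < q.2.1 ∧ q.2.2 < q.1.2 := by
  simp [inversions]

lemma inversions_mono {E F : Finset (α × β)} (h : E ⊆ F) : inversions E ⊆ inversions F :=
  filter_subset_filter _ (product_subset_product h h)

/-- A set without inversions is a chain for the product order, on which ranking a point by the
number of elements of `R` and of `T` below its coordinates is injective. -/
lemma card_le_card_add_card_of_inversions_eq_empty {R : Finset α} {T : Finset β}
    {E : Finset (α × β)} (hE : E ⊆ R ×ˢ T) (h : inversions E = ∅) : #E ≤ #R + #T := by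
  set rank : α × β → ℕ := fun e => #{x ∈ R | x < e.1} + #{y ∈ T | y < e.2}
  have hchain : ∀ e ∈ E, ∀ f ∈ E, e.1 < f.1 → e.2 ≤ f.2 := fun e he f hf h1 =>
    le_of_not_gt fun h2 => by simpa [h] using (mem_inversions (q := (e, f))).2 ⟨⟨he, hf⟩, h1, h2⟩
  have hlt : ∀ e ∈ E, ∀ f ∈ E, toLex e < toLex f → rank e < rank f := by
    intro e he f hf hef
    rcases Prod.Lex.lt_iff.1 hef with h1 | ⟨h1, h2⟩
    · exact Nat.add_lt_add_of_lt_of_le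
        (card_filter_lt_lt_card_filter_lt (mem_product.1 (hE he)).1 h1)
        (card_filter_lt_le_card_filter_lt T (hchain e he f hf h1))
    · have h1 : e.1 = f.1 := h1
      simp only [rank, h1]
      exact Nat.add_lt_add_left (card_filter_lt_lt_card_filter_lt (mem_product.1 (hE he)).2 h2) _
  calc #E ≤ #(range (#R + #T)) := card_le_card_of_injOn rank
        (fun e he => mem_range.2 (Nat.add_lt_add
          (card_filter_lt_lt_card (mem_product.1 (hE he)).1)
          (card_filter_lt_lt_card (mem_product.1 (hE he)).2)))
        (fun e he f hf hef => by
          rcases lt_trichotomy (toLex e) (toLex f) with h | h | h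
          · exact absurd hef (hlt e he f hf h).ne
          · exact toLex.injective h
          · exact absurd hef (hlt f hf e he h).ne')
    _ = #R + #T := card_range _

/-- Deleting one point of an inversion destroys at least that inversion. -/
lemma card_le_card_inversions_add {R : Finset α} {T : Finset β} {E : Finset (α × β)}
    (hE : E ⊆ R ×ˢ T) : #E ≤ #(inversions E) + #R + #T := by
  induction E using Finset.strongInduction with
  | H E ih =>
    obtain h | ⟨q, hq⟩ := (inversions E).eq_empty_or_nonempty
    · have := card_le_card_add_card_of_inversions_eq_empty hE h
      omega
    have hqE : q.1 ∈ E := ((mem_inversions.1 hq).1).1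
    have hsub : inversions (E.erase q.1) ⊂ inversions E :=
      (ssubset_iff_of_subset (inversions_mono (erase_subset _ _))).2
        ⟨q, hq, fun h => (mem_erase.1 (mem_inversions.1 h).1.1).1 rfl⟩
    have := ih _ (erase_ssubset hqE) ((erase_subset _ _).trans hE)
    have := card_lt_card hsub
    have := card_erase_add_one hqE
    omega

lemma inversions_inter_product (E : Finset (α × β)) (R : Finset α) (T : Finset β) :
    inversions (E ∩ R ×ˢ T) =
      {q ∈ inversions E | {q.1.1, q.2.1} ⊆ R ∧ {q.2.2, q.1.2} ⊆ T} := by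
  ext q
  simp only [mem_inversions, mem_filter, mem_inter, mem_product, insert_subset_iff,
    singleton_subset_iff]
  tauto

lemma card_inversions_image_le {γ : Type*} (s : Finset γ) (f : γ → α × β) :
    #(inversions (s.image f)) ≤ #{q ∈ s ×ˢ s | (f q.1).1 < (f q.2).1 ∧ (f q.2).2 < (f q.1).2} := by
  refine (card_le_card (t := image (Prod.map f f) _) ?_).trans card_image_le
  rintro ⟨e, f'⟩ hq
  obtain ⟨⟨he, hf⟩, hlt⟩ := mem_inversions.1 hq
  obtain ⟨x, hx, rfl⟩ := mem_image.1 he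
  obtain ⟨y, hy, rfl⟩ := mem_image.1 hf
  exact mem_image.2 ⟨(x, y), mem_filter.2 ⟨mem_product.2 ⟨hx, hy⟩, hlt⟩, rfl⟩

end Inversions

section BernoulliWeight

/-- The probability that a random subset of `P`, containing each element independently with
probability `p`, equals `R`. -/
def bernoulliWeight {α : Type*} (P : Finset α) (p : ℝ) (R : Finset α) : ℝ :=
  p ^ #R * (1 - p) ^ (#P - #R)

lemma bernoulliWeight_nonneg {α : Type*} (P : Finset α) {p : ℝ} (hp₀ : 0 ≤ p) (hp₁ : p ≤ 1)
    (R : Finset α) : 0 ≤ bernoulliWeight P p R :=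
  mul_nonneg (pow_nonneg hp₀ _) (pow_nonneg (sub_nonneg.2 hp₁) _)

variable {α : Type*} [DecidableEq α]

lemma sum_bernoulliWeight_filter_subset {P s : Finset α} (hs : s ⊆ P) (p : ℝ) :
    ∑ R ∈ P.powerset with s ⊆ R, bernoulliWeight P p R = p ^ #s := by
  -- expand `p ^ #s = ∏ i ∈ P, (p + [i ∉ s] (1 - p))` over the subsets of `P`
  have key := prod_add (fun _ => p) (fun i => if i ∈ s then 0 else 1 - p) P
  rw [prod_congr rfl (g := fun i => if i ∈ s then p else 1) fun i _ => by split_ifs <;> simp,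
    prod_ite_mem, inter_eq_right.2 hs, prod_const] at key
  rw [key, sum_filter]
  refine sum_congr rfl fun R hR => ?_
  split_ifs with hsR
  · rw [prod_const, prod_congr rfl fun i hi => if_neg fun his => (mem_sdiff.1 hi).2 (hsR his),
      prod_const, card_sdiff_of_subset (mem_powerset.1 hR), bernoulliWeight]
  · obtain ⟨i, his, hiR⟩ := not_subset.1 hsR
    rw [prod_eq_zero (mem_sdiff.2 ⟨hs his, hiR⟩) (by simp [his]), mul_zero]

/-- Expected number of `q ∈ Q` with `a q ⊆ R` and `b q ⊆ T`, for independent random `R, T ⊆ P`. -/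
lemma sum_bernoulliWeight_mul_card_filter {ι : Type*} {P : Finset α} (p : ℝ) (Q : Finset ι)
    (a b : ι → Finset α) (ha : ∀ q ∈ Q, a q ⊆ P) (hb : ∀ q ∈ Q, b q ⊆ P) :
    ∑ R ∈ P.powerset, ∑ T ∈ P.powerset,
      bernoulliWeight P p R * bernoulliWeight P p T * #{q ∈ Q | a q ⊆ R ∧ b q ⊆ T} =
      ∑ q ∈ Q, p ^ #(a q) * p ^ #(b q) := by
  calc _ = ∑ R ∈ P.powerset, ∑ T ∈ P.powerset, ∑ q ∈ Q,
        (if a q ⊆ R then bernoulliWeight P p R else 0) *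
          (if b q ⊆ T then bernoulliWeight P p T else 0) := by
        refine sum_congr rfl fun R _ => sum_congr rfl fun T _ => ?_
        rw [card_filter, Nat.cast_sum, mul_sum]
        refine sum_congr rfl fun q _ => ?_
        split_ifs <;> simp_all
    _ = ∑ q ∈ Q, (∑ R ∈ P.powerset with a q ⊆ R, bernoulliWeight P p R) *
          ∑ T ∈ P.powerset with b q ⊆ T, bernoulliWeight P p T := by
        simp_rw [sum_filter, sum_mul_sum]
        rw [sum_comm (s := Q)]
        exact sum_congr rfl fun R _ => sum_comm
    _ = _ := sum_congr rfl fun q hq => by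
        rw [sum_bernoulliWeight_filter_subset (ha q hq), sum_bernoulliWeight_filter_subset (hb q hq)]

lemma sum_bernoulliWeight_mul_card_left (P : Finset α) (p : ℝ) :
    ∑ R ∈ P.powerset, ∑ T ∈ P.powerset,
      bernoulliWeight P p R * bernoulliWeight P p T * #R = p * #P := by
  have hcard : ∀ R ∈ P.powerset, ∀ T : Finset α, #R = #{x ∈ P | {x} ⊆ R ∧ ∅ ⊆ T} := by
    intro R hR T
    simp only [singleton_subset_iff, empty_subset, and_true]
    rw [filter_mem_eq_inter, inter_eq_right.2 (mem_powerset.1 hR)]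
  rw [sum_congr rfl fun R hR => sum_congr rfl fun T _ => by rw [hcard R hR T]]
  refine (sum_bernoulliWeight_mul_card_filter p P (fun x => {x}) (fun _ => ∅) (by simp)
    (by simp)).trans ?_
  simp [mul_comm]

lemma sum_bernoulliWeight_mul_card_right (P : Finset α) (p : ℝ) :
    ∑ R ∈ P.powerset, ∑ T ∈ P.powerset,
      bernoulliWeight P p R * bernoulliWeight P p T * #T = p * #P := by
  rw [sum_comm, ← sum_bernoulliWeight_mul_card_left P p]
  exact sum_congr rfl fun _ _ => sum_congr rfl fun _ _ => by ring

lemma sum_bernoulliWeight_mul_card_inter_product {P : Finset α} {E : Finset (α × α)}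
    (hE : E ⊆ P ×ˢ P) (p : ℝ) :
    ∑ R ∈ P.powerset, ∑ T ∈ P.powerset,
      bernoulliWeight P p R * bernoulliWeight P p T * #(E ∩ R ×ˢ T) = p ^ 2 * #E := by
  have hfilter : ∀ R T, E ∩ R ×ˢ T = {e ∈ E | {e.1} ⊆ R ∧ {e.2} ⊆ T} := by
    intro R T; ext; simp
  simp_rw [hfilter]
  refine (sum_bernoulliWeight_mul_card_filter p E (fun e => {e.1}) (fun e => {e.2})
    (fun e he => singleton_subset_iff.2 (mem_product.1 (hE he)).1)
    (fun e he => singleton_subset_iff.2 (mem_product.1 (hE he)).2)).trans ?_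
  simp; ring

end BernoulliWeight

section Crossing

variable {α : Type*} [LinearOrder α]

lemma sum_bernoulliWeight_mul_card_inversions_inter_product {P : Finset α}
    {E : Finset (α × α)} (hE : E ⊆ P ×ˢ P) (p : ℝ) :
    ∑ R ∈ P.powerset, ∑ T ∈ P.powerset,
      bernoulliWeight P p R * bernoulliWeight P p T * #(inversions (E ∩ R ×ˢ T)) =
      p ^ 4 * #(inversions E) := by
  have hmem : ∀ q ∈ inversions E, ({q.1.1, q.2.1} ⊆ P ∧ {q.2.2, q.1.2} ⊆ P) ∧
      q.1.1 ≠ q.2.1 ∧ q.2.2 ≠ q.1.2 := fun q hq => by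
    obtain ⟨⟨h₁, h₂⟩, hlt₁, hlt₂⟩ := mem_inversions.1 hq
    have h₁ := mem_product.1 (hE h₁)
    have h₂ := mem_product.1 (hE h₂)
    simp only [insert_subset_iff, singleton_subset_iff]
    exact ⟨⟨⟨h₁.1, h₂.1⟩, h₂.2, h₁.2⟩, hlt₁.ne, hlt₂.ne⟩
  simp_rw [inversions_inter_product]
  refine (sum_bernoulliWeight_mul_card_filter p (inversions E) (fun q => {q.1.1, q.2.1})
    (fun q => {q.2.2, q.1.2}) (fun q hq => (hmem q hq).1.1) (fun q hq => (hmem q hq).1.2)).trans ?_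
  rw [sum_congr rfl fun q hq => by rw [card_pair (hmem q hq).2.1, card_pair (hmem q hq).2.2]]
  simp; ring

/-- Average `card_le_card_inversions_add` over independent random subsets `R, T ⊆ P`. -/
lemma sq_mul_card_le_pow_four_mul_card_inversions_add {P : Finset α} {E : Finset (α × α)}
    (hE : E ⊆ P ×ˢ P) {p : ℝ} (hp₀ : 0 ≤ p) (hp₁ : p ≤ 1) :
    p ^ 2 * #E ≤ p ^ 4 * #(inversions E) + 2 * p * #P := by
  calc p ^ 2 * #E = ∑ R ∈ P.powerset, ∑ T ∈ P.powerset,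
        bernoulliWeight P p R * bernoulliWeight P p T * #(E ∩ R ×ˢ T) :=
        (sum_bernoulliWeight_mul_card_inter_product hE p).symm
    _ ≤ ∑ R ∈ P.powerset, ∑ T ∈ P.powerset,
          bernoulliWeight P p R * bernoulliWeight P p T *
            (#(inversions (E ∩ R ×ˢ T)) + #R + #T) := by
        gcongr with R _ T _
        · exact mul_nonneg (bernoulliWeight_nonneg P hp₀ hp₁ R) (bernoulliWeight_nonneg P hp₀ hp₁ T)
        · exact_mod_cast card_le_card_inversions_add (inter_subset_right (s₁ := E))
    _ = p ^ 4 * #(inversions E) + 2 * p * #P := by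
        simp only [mul_add, sum_add_distrib, sum_bernoulliWeight_mul_card_inversions_inter_product hE,
          sum_bernoulliWeight_mul_card_left, sum_bernoulliWeight_mul_card_right]
        ring

/-- The crossing lemma, obtained by applying the previous bound with `p = 4 #P / #E`. -/
theorem card_pow_three_le_mul_card_inversions {P : Finset α} {E : Finset (α × α)}
    (hE : E ⊆ P ×ˢ P) (h : 4 * #P ≤ #E) : #E ^ 3 ≤ 32 * #P ^ 2 * #(inversions E) := by
  obtain rfl | ⟨e, he⟩ := E.eq_empty_or_nonempty
  · simp
  have hP : (0 : ℝ) < #P := by exact_mod_cast card_pos.2 ⟨e.1, (mem_product.1 (hE he)).1⟩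
  have hE₀ : (0 : ℝ) < #E := by exact_mod_cast card_pos.2 ⟨e, he⟩
  have h' : 4 * (#P : ℝ) ≤ #E := by exact_mod_cast h
  have key := sq_mul_card_le_pow_four_mul_card_inversions_add hE (p := 4 * #P / #E)
    (by positivity) ((div_le_one hE₀).2 h')
  have : 8 * (#P : ℝ) ^ 2 * #E ^ 3 ≤ 8 * #P ^ 2 * (32 * #P ^ 2 * #(inversions E)) := by
    field_simp at key
    nlinarith
  exact_mod_cast le_of_mul_le_mul_left this (by positivity)

end Crossing

section SignChange

variable {γ K : Type*} [Preorder γ] [LinearOrder K] [Zero K]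

lemma not_neg_of_neg_of_pos {f : γ → K} (hf : Monotone f ∨ Antitone f) {a b c : γ}
    (hab : a ≤ b) (hbc : b ≤ c) (ha : f a < 0) (hb : 0 < f b) : ¬f c < 0 := fun hc =>
  hf.elim (fun hf => (hc.trans hb).not_ge (hf hbc)) fun hf => (ha.trans hb).not_ge (hf hab)

/-- Along a monotone sequence `u`, each `h q` changes sign from negative to positive on at most
one of the steps `[u i, u (i + 1)]`. -/
lemma sum_card_filter_neg_pos_le {ι : Type*} (Q : Finset ι) {h : ι → γ → K}
    (hh : ∀ q ∈ Q, Monotone (h q) ∨ Antitone (h q)) {n : ℕ} {u : Fin (n + 1) → γ}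
    (hu : Monotone u) :
    ∑ i : Fin n, #{q ∈ Q | h q (u i.castSucc) < 0 ∧ 0 < h q (u i.succ)} ≤ #Q := by
  have hsteps : ∀ q ∈ Q, #{i : Fin n | h q (u i.castSucc) < 0 ∧ 0 < h q (u i.succ)} ≤ 1 := by
    intro q hq
    refine card_le_one.2 fun i hi j hj => ?_
    simp only [mem_filter, mem_univ, true_and] at hi hj
    have hstep : ∀ {i j : Fin n}, i < j → u i.succ ≤ u j.castSucc := fun hij =>
      hu (Fin.succ_le_castSucc_iff.2 hij)
    rcases lt_trichotomy i j with hij | rfl | hij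
    · exact absurd hj.1 (not_neg_of_neg_of_pos (hh q hq) (hu Fin.castSucc_lt_succ.le)
        (hstep hij) hi.1 hi.2)
    · rfl
    · exact absurd hi.1 (not_neg_of_neg_of_pos (hh q hq) (hu Fin.castSucc_lt_succ.le)
        (hstep hij) hj.1 hj.2)
  calc ∑ i : Fin n, #{q ∈ Q | h q (u i.castSucc) < 0 ∧ 0 < h q (u i.succ)}
      = ∑ q ∈ Q, #{i : Fin n | h q (u i.castSucc) < 0 ∧ 0 < h q (u i.succ)} := by
        simp_rw [card_eq_sum_ones, sum_filter]
        exact sum_comm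
    _ ≤ ∑ _q ∈ Q, 1 := sum_le_sum hsteps
    _ = #Q := (card_eq_sum_ones Q).symm

end SignChange

section SumProduct

variable {K : Type*} [CommRing K] [LinearOrder K] [IsStrictOrderedRing K] {A B C : Finset K}

lemma card_product_le_card_mul_add_sq (hA : (0 : K) ∉ A) {s c : K} (hs : s ∈ B + C)
    (hs₀ : s ≠ 0) (hc : c ∈ C) : #(A ×ˢ B) ≤ #(A * (B + C)) ^ 2 := by
  rw [sq, ← card_product]
  refine card_le_card_of_injOn (fun ℓ => (ℓ.1 * s, ℓ.1 * (ℓ.2 + c)))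
    (fun ℓ hℓ => ?_) fun ℓ hℓ ℓ' hℓ' h => ?_
  · obtain ⟨ha, hb⟩ := mem_product.1 hℓ
    exact mem_product.2 ⟨mul_mem_mul ha hs, mul_mem_mul ha (add_mem_add hb hc)⟩
  · simp only [Prod.mk.injEq] at h
    obtain ⟨h₁, h₂⟩ := h
    have ha : ℓ.1 = ℓ'.1 := mul_right_cancel₀ hs₀ h₁
    have ha₀ : ℓ.1 ≠ 0 := fun h₀ => hA (h₀ ▸ (mem_product.1 hℓ).1)
    rw [ha] at h₂ ha₀
    exact Prod.ext ha (add_right_cancel (mul_left_cancel₀ ha₀ h₂))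

lemma card_le_card_mul_add {a b : K} (ha : a ∈ A) (ha₀ : a ≠ 0) (hb : b ∈ B) :
    #C ≤ #(A * (B + C)) :=
  card_le_card_of_injOn (fun c => a * (b + c)) (fun _ hc => mul_mem_mul ha (add_mem_add hb hc))
    fun _ _ _ _ h => add_left_cancel (mul_left_cancel₀ ha₀ h)

lemma monotone_or_antitone_sub_mul_add (q : (K × K) × (K × K)) :
    Monotone (fun x => q.1.1 * (q.1.2 + x) - q.2.1 * (q.2.2 + x)) ∨
      Antitone (fun x => q.1.1 * (q.1.2 + x) - q.2.1 * (q.2.2 + x)) := by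
  have h : ∀ x, q.1.1 * (q.1.2 + x) - q.2.1 * (q.2.2 + x) =
      (q.1.1 - q.2.1) * x + (q.1.1 * q.1.2 - q.2.1 * q.2.2) := fun x => by ring
  simp only [h]
  rcases le_total q.2.1 q.1.1 with hq | hq
  · exact Or.inl fun x y hxy => by linarith [mul_le_mul_of_nonneg_left hxy (sub_nonneg.2 hq)]
  · exact Or.inr fun x y hxy => by linarith [mul_le_mul_of_nonpos_left hxy (sub_nonpos.2 hq)]

/-- The lines `x ↦ a * (b + x)`, `(a, b) ∈ A ×ˢ B`, evaluated at `c ≠ c'` in `C`, give `#A * #B`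
distinct points of `A(B+C) × A(B+C)`, to which the crossing lemma applies. -/
lemma card_product_pow_three_le (hA : (0 : K) ∉ A) {c c' : K} (hc : c ∈ C) (hc' : c' ∈ C)
    (hcc' : c ≠ c') (h : 4 * #(A * (B + C)) ≤ #(A ×ˢ B)) :
    #(A ×ˢ B) ^ 3 ≤ 32 * #(A * (B + C)) ^ 2 * #{q ∈ (A ×ˢ B) ×ˢ (A ×ˢ B) |
      q.1.1 * (q.1.2 + c) - q.2.1 * (q.2.2 + c) < 0 ∧
        0 < q.1.1 * (q.1.2 + c') - q.2.1 * (q.2.2 + c')} := by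
  set f : K × K → K × K := fun ℓ => (ℓ.1 * (ℓ.2 + c), ℓ.1 * (ℓ.2 + c'))
  have hinj : Set.InjOn f ↑(A ×ˢ B) := fun ℓ hℓ ℓ' _ hf => by
    simp only [f, Prod.mk.injEq] at hf
    obtain ⟨h₁, h₂⟩ := hf
    have ha : ℓ.1 = ℓ'.1 := mul_right_cancel₀ (sub_ne_zero.2 hcc') (by linear_combination h₁ - h₂)
    have ha₀ : ℓ.1 ≠ 0 := fun h₀ => hA (h₀ ▸ (mem_product.1 hℓ).1)
    rw [ha] at h₁ ha₀
    exact Prod.ext ha (add_right_cancel (mul_left_cancel₀ ha₀ h₁))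
  have hsub : (A ×ˢ B).image f ⊆ (A * (B + C)) ×ˢ (A * (B + C)) := by
    simp only [subset_iff, mem_image, mem_product]
    rintro _ ⟨ℓ, ⟨ha, hb⟩, rfl⟩
    exact ⟨mul_mem_mul ha (add_mem_add hb hc), mul_mem_mul ha (add_mem_add hb hc')⟩
  have hcard := card_image_of_injOn hinj
  calc #(A ×ˢ B) ^ 3 ≤ 32 * #(A * (B + C)) ^ 2 * #(inversions ((A ×ˢ B).image f)) := by
        simpa [hcard] using card_pow_three_le_mul_card_inversions hsub (hcard ▸ h)
    _ ≤ _ := by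
        refine Nat.mul_le_mul_left _ ?_
        refine (card_inversions_image_le _ f).trans (card_le_card fun q hq => ?_)
        simpa only [mem_filter, f, sub_neg, sub_pos] using hq

/-- Sum `card_product_pow_three_le` over the `#C - 1` consecutive pairs of `C`: two lines cross at
most once, so the crossing pairs of lines add up to at most `#(A ×ˢ B) ^ 2`. -/
lemma card_sub_one_mul_card_product_le (hA : (0 : K) ∉ A)
    (h : 4 * #(A * (B + C)) ≤ #(A ×ˢ B)) :
    (#C - 1) * #(A ×ˢ B) ≤ 32 * #(A * (B + C)) ^ 2 := by
  obtain hC | hC := eq_or_ne #C 0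
  · simp [hC]
  obtain ⟨n, hn⟩ := Nat.exists_eq_add_one_of_ne_zero hC
  obtain hL | hL := (#(A ×ˢ B)).eq_zero_or_pos
  · simp [hL]
  set u := C.orderEmbOfFin hn
  set S : Fin n → Finset ((K × K) × (K × K)) := fun i => {q ∈ (A ×ˢ B) ×ˢ (A ×ˢ B) |
    q.1.1 * (q.1.2 + u i.castSucc) - q.2.1 * (q.2.2 + u i.castSucc) < 0 ∧
      0 < q.1.1 * (q.1.2 + u i.succ) - q.2.1 * (q.2.2 + u i.succ)}
  have hslot : ∀ i, #(A ×ˢ B) ^ 3 ≤ 32 * #(A * (B + C)) ^ 2 * #(S i) := fun i =>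
    card_product_pow_three_le hA (C.orderEmbOfFin_mem hn _) (C.orderEmbOfFin_mem hn _)
      (u.injective.ne Fin.castSucc_lt_succ.ne) h
  have hsum : ∑ i, #(S i) ≤ #(A ×ˢ B) ^ 2 :=
    (sum_card_filter_neg_pos_le _ (fun q _ => monotone_or_antitone_sub_mul_add q)
      u.monotone).trans_eq (by rw [card_product, sq])
  have : n * #(A ×ˢ B) * #(A ×ˢ B) ^ 2 ≤ 32 * #(A * (B + C)) ^ 2 * #(A ×ˢ B) ^ 2 :=
    calc n * #(A ×ˢ B) * #(A ×ˢ B) ^ 2 = ∑ _i : Fin n, #(A ×ˢ B) ^ 3 := by simp; ring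
      _ ≤ ∑ i, 32 * #(A * (B + C)) ^ 2 * #(S i) := sum_le_sum fun i _ => hslot i
      _ = 32 * #(A * (B + C)) ^ 2 * ∑ i, #(S i) := by rw [mul_sum]
      _ ≤ _ := Nat.mul_le_mul_left _ hsum
  rw [hn, Nat.add_sub_cancel]
  exact Nat.le_of_mul_le_mul_right this (pow_pos hL 2)

theorem card_mul_card_mul_card_le (hA : (0 : K) ∉ A) (hBC : B + C ≠ {0}) :
    #A * #B * #C ≤ 33 * #(A * (B + C)) ^ 2 := by
  obtain rfl | ⟨a, ha⟩ := A.eq_empty_or_nonempty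
  · simp
  obtain rfl | ⟨b, hb⟩ := B.eq_empty_or_nonempty
  · simp
  obtain rfl | ⟨c, hc⟩ := C.eq_empty_or_nonempty
  · simp
  obtain ⟨s, hs, hs₀⟩ : ∃ s ∈ B + C, s ≠ 0 := by
    by_contra! h
    exact hBC (eq_singleton_iff_unique_mem.2 ⟨h _ (add_mem_add hb hc) ▸ add_mem_add hb hc, h⟩)
  have hL := card_product_le_card_mul_add_sq hA hs hs₀ hc
  have hC := card_le_card_mul_add (C := C) ha (ne_of_mem_of_not_mem ha hA) hb
  rw [← card_product]
  rcases lt_or_ge #(A ×ˢ B) (4 * #(A * (B + C))) with hsmall | hlarge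
  · nlinarith
  · have := card_sub_one_mul_card_product_le hA hlarge
    have hC₁ : 1 ≤ #C := card_pos.2 ⟨c, hc⟩
    calc #(A ×ˢ B) * #C = (#C - 1) * #(A ×ˢ B) + #(A ×ˢ B) := by
          rw [Nat.sub_one_mul, Nat.sub_add_cancel (Nat.le_mul_of_pos_left _ hC₁), mul_comm]
      _ ≤ 33 * #(A * (B + C)) ^ 2 := by omega

end SumProduct

theorem stmt13 :
    ∃ c > (0:ℝ),
      ∀ A B C : Finset ℝ, A.Nonempty → A ≠ {0} →
        (B + C).Nonempty → B + C ≠ {0} →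
        c * ((A.card : ℝ) * (B.card : ℝ) * (C.card : ℝ)) ^ ((1:ℝ)/2) ≤
          ((A * (B + C)).card : ℝ) := by
  refine ⟨1 / 9, by norm_num, fun A B C _ hA _ hBC => ?_⟩
  have hcard : #A * #B * #C ≤ (9 * #(A * (B + C))) ^ 2 :=
    calc #A * #B * #C ≤ 2 * (#(A.erase 0) * #B * #C) := by
          rw [← mul_assoc, ← mul_assoc]; gcongr; exact card_le_two_mul_card_erase hA
      _ ≤ 2 * (33 * #(A.erase 0 * (B + C)) ^ 2) :=
          Nat.mul_le_mul_left _ (card_mul_card_mul_card_le (notMem_erase 0 A) hBC)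
      _ ≤ (9 * #(A * (B + C))) ^ 2 := by
          have := card_le_card (mul_subset_mul_right (t := B + C) (erase_subset 0 A))
          nlinarith
  rw [← Real.sqrt_eq_rpow, one_div_mul_eq_div, div_le_iff₀' (by norm_num),
    Real.sqrt_le_left (by positivity)]
  exact_mod_cast hcard
end

section
/- There exists an absolute constant c > 0 such that the following holds: for all finite sets A, B, C of real numbers with A ≠ {0}, A nonempty, and B+C nonempty and not equal to {0}, one has |A(B+C)| ≥ c·min{ (|A|·|B|·|C|)^{1/2} , |A|·|B| }. -/
/-!
Put `A' = A \ {0}` and `T = A(B + C)`. The `|A'||B|` lines `y = a(b + x)` are distinct and each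
passes through `|C|` points of the grid `C × T`. Cut `C` into blocks of 8 consecutive elements and
`T` into `k = |C|/8` blocks of consecutive elements. A line is monotone, so it visits at most
`2k + 1 ≤ 3|C|/8` cells of the resulting partition of the grid, hence it contains many pairs of
distinct points lying in a common cell. Such a pair determines the line, while there are at most
`8|C| · 2|T|²/k` such pairs in the grid. This gives `|A'||B||C| ≤ 1024 |T|²`, which is stronger than
the claim, since `|A| ≤ 2|A'|`.
-/

open Finset Pointwise

theorem card_filter_prod_apply_eq_le {α β : Type*} [DecidableEq β] {s : Finset α} {k : α → β}
    {p : ℕ} (hk : ∀ x ∈ s, #(s.filter (k · = k x)) ≤ p) :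
    #((s ×ˢ s).filter fun z => k z.1 = k z.2) ≤ p * #s := by
  rw [card_filter, sum_product, mul_comm, ← smul_eq_mul, ← sum_const]
  refine sum_le_sum fun x hx => ?_
  simpa [← card_filter, eq_comm] using hk x hx

theorem card_le_card_filter_offDiag_add_card_image {α β : Type*} [DecidableEq α] [DecidableEq β]
    (s : Finset α) (f : α → β) :
    #s ≤ #(s.offDiag.filter fun z => f z.1 = f z.2) + #(s.image f) := by
  have hfib : #(s.offDiag.filter fun z => f z.1 = f z.2) =
      ∑ v ∈ s.image f, #(s.filter (f · = v)).offDiag := by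
    rw [card_eq_sum_card_fiberwise (f := fun z => f z.1) (t := s.image f)]
    · refine sum_congr rfl fun v _ => congrArg card ?_
      ext z
      simp only [mem_filter, mem_offDiag]
      constructor
      · rintro ⟨⟨⟨hz₁, hz₂, hne⟩, he⟩, rfl⟩; exact ⟨⟨hz₁, rfl⟩, ⟨hz₂, he.symm⟩, hne⟩
      · rintro ⟨⟨hz₁, rfl⟩, ⟨hz₂, he⟩, hne⟩; exact ⟨⟨⟨hz₁, hz₂, hne⟩, he.symm⟩, rfl⟩
    · intro z hz
      exact mem_image_of_mem f (mem_offDiag.1 (mem_filter.1 hz).1).1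
  rw [hfib, card_eq_sum_card_image f s, card_eq_sum_ones (s.image f), ← sum_add_distrib]
  refine sum_le_sum fun v _ => ?_
  rw [offDiag_card]
  set n := #(s.filter (f · = v))
  have : 2 * n ≤ n * n + 1 := by nlinarith [sq_nonneg ((n : ℤ) - 1)]
  have : n ≤ n * n := Nat.le_mul_self n
  omega

section RankBlock

variable {α : Type*} [LinearOrder α]

def rankBlock (s : Finset α) (p : ℕ) (x : α) : ℕ := #(s.filter (· < x)) / p

variable {s : Finset α} {p : ℕ}

theorem monotone_rankBlock : Monotone (rankBlock s p) := fun _ _ hxy =>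
  Nat.div_le_div_right <| card_le_card <| monotone_filter_right s fun _ _ hz => hz.trans_le hxy

theorem strictMonoOn_card_filter_lt : StrictMonoOn (fun x => #(s.filter (· < x))) s := by
  intro x hx y _ hxy
  refine card_lt_card ⟨monotone_filter_right s fun _ _ hz => hz.trans hxy, fun h => ?_⟩
  simpa using h (mem_filter.2 ⟨hx, hxy⟩)

theorem rankBlock_lt {m : ℕ} (hs : #s ≤ p * m) {x : α} (hx : x ∈ s) : rankBlock s p x < m :=
  Nat.div_lt_of_lt_mul <|
    (card_lt_card <| filter_ssubset (p := (· < x)).2 ⟨x, hx, lt_irrefl x⟩).trans_le hs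

theorem card_filter_rankBlock_eq_le (hp : 0 < p) (i : ℕ) :
    #(s.filter (rankBlock s p · = i)) ≤ p := by
  have hmaps : Set.MapsTo (fun x => #(s.filter (· < x))) (s.filter (rankBlock s p · = i))
      (Ico (i * p) (i * p + p)) := by
    intro x hx
    have := (Nat.div_eq_iff hp).1 (mem_filter.1 hx).2
    simp only [coe_Ico, Set.mem_Ico]
    omega
  simpa using card_le_card_of_injOn _ hmaps
    (strictMonoOn_card_filter_lt.injOn.mono (filter_subset _ s))

theorem card_filter_prod_rankBlock_eq_le (hp : 0 < p) :
    #((s ×ˢ s).filter fun z => rankBlock s p z.1 = rankBlock s p z.2) ≤ p * #s :=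
  card_filter_prod_apply_eq_le fun _ _ => card_filter_rankBlock_eq_le hp _

end RankBlock

section Staircase

variable {α : Type*} [LinearOrder α] {s : Finset α} {f g : α → ℕ} {m n : ℕ}

theorem card_image_prod_le_of_monotoneOn (hf : MonotoneOn f s) (hg : MonotoneOn g s)
    (hfm : ∀ x ∈ s, f x < m) (hgn : ∀ x ∈ s, g x < n) :
    #(s.image fun x => (f x, g x)) ≤ m + n := by
  have hmaps : Set.MapsTo (fun z : ℕ × ℕ => z.1 + z.2) (s.image fun x => (f x, g x))
      (range (m + n)) := by
    simp only [Set.MapsTo, coe_image, Set.mem_image, mem_coe, coe_range, Set.mem_Iio]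
    rintro _ ⟨x, hx, rfl⟩
    have := hfm x hx; have := hgn x hx; omega
  have hinj : Set.InjOn (fun z : ℕ × ℕ => z.1 + z.2) (s.image fun x => (f x, g x)) := by
    simp only [Set.InjOn, coe_image, Set.mem_image, mem_coe]
    rintro _ ⟨x, hx, rfl⟩ _ ⟨y, hy, rfl⟩ hsum
    rcases le_total x y with hxy | hxy
    · have := hf hx hy hxy; have := hg hx hy hxy; simp only at hsum; ext <;> simp only <;> omega
    · have := hf hy hx hxy; have := hg hy hx hxy; simp only at hsum; ext <;> simp only <;> omega
  simpa using card_le_card_of_injOn _ hmaps hinj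

theorem card_image_prod_le_of_antitoneOn (hf : MonotoneOn f s) (hg : AntitoneOn g s)
    (hfm : ∀ x ∈ s, f x < m) (hgn : ∀ x ∈ s, g x < n) :
    #(s.image fun x => (f x, g x)) ≤ m + n := by
  have hflip : (s.image fun x => (f x, n - 1 - g x)).image (fun z => (z.1, n - 1 - z.2)) =
      s.image fun x => (f x, g x) := by
    rw [image_image]
    refine image_congr fun x hx => ?_
    have := hgn x hx
    simp only [Function.comp_apply, Prod.mk.injEq, true_and]
    omega
  rw [← hflip]
  refine card_image_le.trans <| card_image_prod_le_of_monotoneOn hf ?_ hfm fun x hx => ?_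
  · exact fun x hx y hy hxy => Nat.sub_le_sub_left (hg hx hy hxy) _
  · have := hgn x hx
    omega

end Staircase

section Lines

-- A pair `ℓ : ℝ × ℝ` stands for the line `x ↦ ℓ.1 * x + ℓ.2`.

theorem eq_of_mul_add_eq_of_ne {ℓ ℓ' : ℝ × ℝ} {x y : ℝ} (hxy : x ≠ y)
    (hx : ℓ.1 * x + ℓ.2 = ℓ'.1 * x + ℓ'.2) (hy : ℓ.1 * y + ℓ.2 = ℓ'.1 * y + ℓ'.2) : ℓ = ℓ' := by
  have hslope : ℓ.1 = ℓ'.1 :=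
    mul_right_cancel₀ (sub_ne_zero.2 hxy) (by linear_combination hx - hy)
  exact Prod.ext hslope (by rw [hslope] at hx; linarith)

variable {C T : Finset ℝ} {p q m n : ℕ}

theorem card_image_rankBlock_line_le (hC : #C ≤ p * m) (hT : #T ≤ q * n) {ℓ : ℝ × ℝ}
    (hℓ : ∀ x ∈ C, ℓ.1 * x + ℓ.2 ∈ T) :
    #(C.image fun x => (rankBlock C p x, rankBlock T q (ℓ.1 * x + ℓ.2))) ≤ m + n := by
  have hCm : ∀ x ∈ C, rankBlock C p x < m := fun x hx => rankBlock_lt hC hx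
  have hTn : ∀ x ∈ C, rankBlock T q (ℓ.1 * x + ℓ.2) < n := fun x hx => rankBlock_lt hT (hℓ x hx)
  rcases le_total 0 ℓ.1 with hslope | hslope
  · exact card_image_prod_le_of_monotoneOn (monotone_rankBlock.monotoneOn _)
      (fun _ _ _ _ hxy => monotone_rankBlock (by nlinarith)) hCm hTn
  · exact card_image_prod_le_of_antitoneOn (monotone_rankBlock.monotoneOn _)
      (fun _ _ _ _ hxy => monotone_rankBlock (by nlinarith)) hCm hTn

theorem card_mul_card_le_of_mapsTo {L : Finset (ℝ × ℝ)} (hL : ∀ ℓ ∈ L, ∀ x ∈ C, ℓ.1 * x + ℓ.2 ∈ T)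
    (hp : 0 < p) (hq : 0 < q) (hC : #C ≤ p * m) (hT : #T ≤ q * n) :
    #L * #C ≤ p * #C * (q * #T) + #L * (m + n) := by
  set cell : ℝ × ℝ → ℝ → ℕ × ℕ := fun ℓ x => (rankBlock C p x, rankBlock T q (ℓ.1 * x + ℓ.2))
  set P : ℝ × ℝ → Finset (ℝ × ℝ) := fun ℓ => C.offDiag.filter fun z => cell ℓ z.1 = cell ℓ z.2
  have hsplit : #L * #C ≤ #(L.sigma P) + #L * (m + n) := by
    have hline : ∀ ℓ ∈ L, #C ≤ #(P ℓ) + (m + n) := fun ℓ hℓ =>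
      (card_le_card_filter_offDiag_add_card_image C (cell ℓ)).trans
        (add_le_add_right (card_image_rankBlock_line_le hC hT (hL ℓ hℓ)) _)
    calc #L * #C = ∑ ℓ ∈ L, #C := by rw [sum_const, smul_eq_mul]
      _ ≤ ∑ ℓ ∈ L, (#(P ℓ) + (m + n)) := sum_le_sum hline
      _ = #(L.sigma P) + #L * (m + n) := by rw [sum_add_distrib, card_sigma, sum_const, smul_eq_mul]
  have hpairs : #(L.sigma P) ≤
      #((C ×ˢ C).filter fun z => rankBlock C p z.1 = rankBlock C p z.2) *
        #((T ×ˢ T).filter fun z => rankBlock T q z.1 = rankBlock T q z.2) := by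
    rw [← card_product]
    refine card_le_card_of_injOn
      (fun w => (w.2, (w.1.1 * w.2.1 + w.1.2, w.1.1 * w.2.2 + w.1.2))) ?_ ?_
    · rintro ⟨ℓ, x, y⟩ hw
      simp only [coe_sigma, Set.mem_sigma_iff, mem_coe, P, mem_filter, mem_offDiag, cell,
        Prod.mk.injEq] at hw
      obtain ⟨hℓ, ⟨hx, hy, -⟩, hC, hT⟩ := hw
      simp only [coe_product, coe_filter, Set.mem_prod, mem_product]
      exact ⟨⟨⟨hx, hy⟩, hC⟩, ⟨hL ℓ hℓ x hx, hL ℓ hℓ y hy⟩, hT⟩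
    · rintro ⟨ℓ, x, y⟩ hw ⟨ℓ', x', y'⟩ _ heq
      simp only [coe_sigma, Set.mem_sigma_iff, mem_coe, P, mem_filter, mem_offDiag] at hw
      simp only [Prod.mk.injEq] at heq
      obtain ⟨⟨rfl, rfl⟩, hx, hy⟩ := heq
      rw [eq_of_mul_add_eq_of_ne hw.2.1.2.2 hx hy]
  calc #L * #C ≤ #(L.sigma P) + #L * (m + n) := hsplit
    _ ≤ p * #C * (q * #T) + #L * (m + n) := by
      gcongr
      exact hpairs.trans (Nat.mul_le_mul (card_filter_prod_rankBlock_eq_le hp)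
        (card_filter_prod_rankBlock_eq_le hq))

theorem card_mul_card_le_of_mapsTo_of_card_le {L : Finset (ℝ × ℝ)}
    (hL : ∀ ℓ ∈ L, ∀ x ∈ C, ℓ.1 * x + ℓ.2 ∈ T) (hCT : #C ≤ #T) (hC : 8 ≤ #C) :
    #L * #C ≤ 1024 * #T ^ 2 := by
  -- blocks of 8 elements of `C` and `k` blocks of `T`, so a line meets at most `2k + 1` cells
  set k := #C / 8
  have hk : 0 < k := Nat.div_pos hC (by norm_num)
  have hTk : #T ≤ (#T / k + 1) * k := by
    rw [add_mul, one_mul]; exact (Nat.lt_div_mul_add hk).le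
  have hkey := card_mul_card_le_of_mapsTo hL (by norm_num) (Nat.succ_pos _)
    (show #C ≤ 8 * (k + 1) by omega) hTk
  have hqk : (#T / k + 1) * k ≤ 2 * #T := by
    have := Nat.div_mul_le_self #T k; rw [add_mul, one_mul]; omega
  have hscaled : #L * #C * k ≤ 16 * #C * #T ^ 2 + 3 * #L * k ^ 2 := by
    calc #L * #C * k ≤ (8 * #C * ((#T / k + 1) * #T) + #L * (k + 1 + k)) * k :=
          Nat.mul_le_mul_right _ hkey
      _ = 8 * #C * #T * ((#T / k + 1) * k) + #L * k * (2 * k + 1) := by ring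
      _ ≤ 8 * #C * #T * (2 * #T) + #L * k * (3 * k) := by gcongr; omega
      _ = 16 * #C * #T ^ 2 + 3 * #L * k ^ 2 := by ring
  have hCk : 8 * #L * k ^ 2 ≤ #L * #C * k := by
    calc 8 * #L * k ^ 2 = #L * (8 * k) * k := by ring
      _ ≤ #L * #C * k := by gcongr; omega
  have hLk2 : 5 * #L * k ^ 2 ≤ 256 * k * #T ^ 2 := by
    have : 16 * #C * #T ^ 2 ≤ 256 * k * #T ^ 2 :=
      Nat.mul_le_mul_right _ (by omega)
    linarith
  have hLk : 5 * (#L * k) ≤ 256 * #T ^ 2 := by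
    refine Nat.le_of_mul_le_mul_right ?_ hk
    calc 5 * (#L * k) * k = 5 * #L * k ^ 2 := by ring
      _ ≤ 256 * k * #T ^ 2 := hLk2
      _ = 256 * #T ^ 2 * k := by ring
  have hLCk : #L * #C ≤ 16 * (#L * k) := by
    calc #L * #C ≤ #L * (16 * k) := Nat.mul_le_mul_left _ (by omega)
      _ = 16 * (#L * k) := by ring
  omega

end Lines

theorem card_mul_card_mul_card_le_sq_card_mul_add {A B C : Finset ℝ} {a s : ℝ} (ha : a ∈ A)
    (ha0 : a ≠ 0) (hs : s ∈ B + C) (hs0 : s ≠ 0) :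
    #A * #B * #C ≤ 2048 * #(A * (B + C)) ^ 2 := by
  set T := A * (B + C)
  obtain ⟨b, hb, c, hc, -⟩ := mem_add.1 hs
  have hAT : #A ≤ #T := card_le_card_mul_right₀ hs hs0
  have hBT : #B ≤ #T := (card_le_card_add_right ⟨c, hc⟩).trans (card_le_card_mul_left₀ ha ha0)
  have hCT : #C ≤ #T := (card_le_card_add_left ⟨b, hb⟩).trans (card_le_card_mul_left₀ ha ha0)
  set A' := A.erase 0
  have hA' : #A ≤ 2 * #A' := by
    have : #A - 1 ≤ #A' := pred_card_le_card_erase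
    have : 0 < #A' := card_pos.2 ⟨a, mem_erase.2 ⟨ha0, ha⟩⟩
    omega
  set L := (A' ×ˢ B).image fun z => (z.1, z.1 * z.2)
  have hL : #L = #A' * #B := by
    rw [card_image_of_injOn, card_product]
    rintro ⟨x, y⟩ hxy ⟨x', y'⟩ _ h
    simp only [Prod.mk.injEq] at h ⊢
    obtain ⟨rfl, h⟩ := h
    exact ⟨rfl, mul_left_cancel₀ (mem_erase.1 (mem_product.1 hxy).1).1 h⟩
  have hLT : ∀ ℓ ∈ L, ∀ x ∈ C, ℓ.1 * x + ℓ.2 ∈ T := by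
    simp only [L, mem_image, mem_product]
    rintro _ ⟨⟨x, y⟩, ⟨hx, hy⟩, rfl⟩ z hz
    rw [← mul_add, add_comm]
    exact mul_mem_mul (mem_of_mem_erase hx) (add_mem_add hy hz)
  have hLC : #L * #C ≤ 1024 * #T ^ 2 := by
    rcases le_or_gt 8 #C with hC | hC
    · exact card_mul_card_le_of_mapsTo_of_card_le hLT hCT hC
    · have : #L ≤ #T * #T := hL ▸ Nat.mul_le_mul ((card_erase_le).trans hAT) hBT
      nlinarith
  calc #A * #B * #C ≤ 2 * #A' * #B * #C := by gcongr
    _ = 2 * (#L * #C) := by rw [hL]; ring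
    _ ≤ 2048 * #T ^ 2 := by omega

theorem stmt14 :
    ∃ c > (0:ℝ),
      ∀ A B C : Finset ℝ, A.Nonempty → A ≠ {0} →
        (B + C).Nonempty → B + C ≠ {0} →
        c * min (((A.card : ℝ) * (B.card : ℝ) * (C.card : ℝ)) ^ ((1:ℝ)/2))
            ((A.card : ℝ) * (B.card : ℝ)) ≤
          ((A * (B + C)).card : ℝ) := by
  refine ⟨1 / 64, by norm_num, fun A B C hA hA0 hBC hBC0 => ?_⟩
  obtain ⟨a, ha, ha0⟩ : ∃ a ∈ A, a ≠ 0 := by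
    by_contra! h; exact hA0 (eq_singleton_iff_nonempty_unique_mem.2 ⟨hA, h⟩)
  obtain ⟨s, hs, hs0⟩ : ∃ s ∈ B + C, s ≠ 0 := by
    by_contra! h; exact hBC0 (eq_singleton_iff_nonempty_unique_mem.2 ⟨hBC, h⟩)
  have hbound : ((#A : ℝ) * #B * #C) ≤ (64 * #(A * (B + C))) ^ 2 := by
    exact_mod_cast (card_mul_card_mul_card_le_sq_card_mul_add ha ha0 hs hs0).trans (by nlinarith)
  have hsqrt : ((#A : ℝ) * #B * #C) ^ ((1:ℝ)/2) ≤ 64 * #(A * (B + C)) := by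
    rw [← Real.sqrt_eq_rpow, Real.sqrt_le_iff]
    exact ⟨by positivity, hbound⟩
  linarith [min_le_left (((#A : ℝ) * #B * #C) ^ ((1:ℝ)/2)) ((#A : ℝ) * #B)]
end

section
/- Let N be a positive integer divisible by 3 and let A = {2ⁿ : n ∈ {1, 2, …, N}} ⊂ ℝ. Then the multiplicative energy of the sum set satisfies E*(A+A) ≥ (N/3)⁵. -/
open Finset Pointwise

/-- The multiplicative energy of a finite set `X` of real numbers: the number of
quadruples `(a, b, c, d) ∈ X⁴` with `a * b = c * d`. -/
noncomputable def mulEnergy (X : Finset ℝ) : ℕ :=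
  ((X ×ˢ X ×ˢ X ×ˢ X).filter fun t => t.1 * t.2.1 = t.2.2.1 * t.2.2.2).card

/-!
With `s(a, b) = 2ᵃ + 2ᵇ` and `N = 3M`, every choice of `i ∈ [1, M]`, `j, k ∈ [M+1, 2M]`,
`l ∈ [2M+1, 3M]` and `t ∈ [0, M)` gives the solution
`s(i, j) · s(k, l) = s(i+t, j+t) · s(k-t, l-t)` with all four factors in `A + A`.
Since binary expansions are unique, `s(a, b)` with `a < b` determines `a` and `b`, so these
`M⁵` solutions are pairwise distinct.
-/

theorem Nat.le_of_two_pow_add_two_pow_eq {a b c d : ℕ} (hab : a < b) (hcd : c < d)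
    (h : 2 ^ a + 2 ^ b = 2 ^ c + 2 ^ d) : c ≤ a := by
  by_contra! hac
  have hdvd : ∀ {e}, a < e → 2 ^ (a + 1) ∣ 2 ^ e := fun he => Nat.pow_dvd_pow 2 he
  have hsum : 2 ^ (a + 1) ∣ 2 ^ a + 2 ^ b := h ▸ dvd_add (hdvd hac) (hdvd (hac.trans hcd))
  have := Nat.le_of_dvd (by positivity) ((Nat.dvd_add_left (hdvd hab)).mp hsum)
  rw [pow_succ] at this
  omega

theorem Nat.two_pow_add_two_pow_inj {a b c d : ℕ} (hab : a < b) (hcd : c < d)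
    (h : 2 ^ a + 2 ^ b = 2 ^ c + 2 ^ d) : a = c ∧ b = d := by
  obtain rfl : a = c :=
    le_antisymm (Nat.le_of_two_pow_add_two_pow_eq hcd hab h.symm)
      (Nat.le_of_two_pow_add_two_pow_eq hab hcd h)
  exact ⟨rfl, Nat.pow_right_injective le_rfl (Nat.add_left_cancel h)⟩

theorem Real.two_pow_add_two_pow_inj {a b c d : ℕ} (hab : a < b) (hcd : c < d)
    (h : (2 : ℝ) ^ a + 2 ^ b = 2 ^ c + 2 ^ d) : a = c ∧ b = d :=
  Nat.two_pow_add_two_pow_inj hab hcd (by exact_mod_cast h)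

theorem pow_add_pow_mul_pow_add_pow_shift {R : Type*} [CommSemiring R] (x : R)
    {i j k l t : ℕ} (htk : t ≤ k) (htl : t ≤ l) :
    (x ^ (i + t) + x ^ (j + t)) * (x ^ (k - t) + x ^ (l - t)) =
      (x ^ i + x ^ j) * (x ^ k + x ^ l) := by
  obtain ⟨k, rfl⟩ := Nat.exists_eq_add_of_le' htk
  obtain ⟨l, rfl⟩ := Nat.exists_eq_add_of_le' htl
  simp only [Nat.add_sub_cancel, pow_add]
  ring

theorem card_le_mulEnergy {ι : Type*} {s : Finset ι} {X : Finset ℝ} {f : ι → ℝ × ℝ × ℝ × ℝ}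
    (hf : ∀ i ∈ s, f i ∈ X ×ˢ X ×ˢ X ×ˢ X ∧ (f i).1 * (f i).2.1 = (f i).2.2.1 * (f i).2.2.2)
    (hinj : Set.InjOn f s) : s.card ≤ _root_.mulEnergy X :=
  card_le_card_of_injOn f (fun i hi => mem_filter.mpr (hf i hi)) hinj

noncomputable def powersOfTwo (N : ℕ) : Finset ℝ := (Icc 1 N).image fun n => (2 : ℝ) ^ n

theorem two_pow_add_two_pow_mem_add {N a b : ℕ} (ha : a ∈ Icc 1 N) (hb : b ∈ Icc 1 N) :
    (2 : ℝ) ^ a + 2 ^ b ∈ powersOfTwo N + powersOfTwo N :=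
  add_mem_add (mem_image_of_mem _ ha) (mem_image_of_mem _ hb)

def shiftParams (M : ℕ) : Finset (ℕ × ℕ × ℕ × ℕ × ℕ) :=
  Icc 1 M ×ˢ Icc (M + 1) (2 * M) ×ˢ Icc (M + 1) (2 * M) ×ˢ Icc (2 * M + 1) (3 * M) ×ˢ range M

theorem card_shiftParams (M : ℕ) : (shiftParams M).card = M ^ 5 := by
  simp only [shiftParams, card_product, Nat.card_Icc, card_range]
  rw [Nat.add_sub_cancel, show 2 * M + 1 - (M + 1) = M by omega,
    show 3 * M + 1 - (2 * M + 1) = M by omega]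
  ring

noncomputable def shiftQuadruple (p : ℕ × ℕ × ℕ × ℕ × ℕ) : ℝ × ℝ × ℝ × ℝ :=
  let ⟨i, j, k, l, t⟩ := p
  (2 ^ i + 2 ^ j, 2 ^ k + 2 ^ l, 2 ^ (i + t) + 2 ^ (j + t), 2 ^ (k - t) + 2 ^ (l - t))

theorem shiftQuadruple_injOn :
    Set.InjOn shiftQuadruple {p | p.1 < p.2.1 ∧ p.2.2.1 < p.2.2.2.1} := by
  rintro ⟨i, j, k, l, t⟩ ⟨hij, hkl⟩ ⟨i', j', k', l', t'⟩ ⟨hij', hkl'⟩ h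
  dsimp only at hij hkl hij' hkl'
  simp only [shiftQuadruple, Prod.mk.injEq] at h
  obtain ⟨h₁, h₂, h₃, -⟩ := h
  obtain ⟨rfl, rfl⟩ := Real.two_pow_add_two_pow_inj hij hij' h₁
  obtain ⟨rfl, rfl⟩ := Real.two_pow_add_two_pow_inj hkl hkl' h₂
  obtain ⟨hi, -⟩ := Real.two_pow_add_two_pow_inj (by omega) (by omega) h₃
  obtain rfl : t = t' := by omega
  rfl

theorem coe_shiftParams_subset (M : ℕ) :
    ↑(shiftParams M) ⊆ {p : ℕ × ℕ × ℕ × ℕ × ℕ | p.1 < p.2.1 ∧ p.2.2.1 < p.2.2.2.1} := by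
  intro p hp
  simp only [shiftParams, coe_product, Set.mem_prod, coe_Icc, Set.mem_Icc] at hp
  exact ⟨by omega, by omega⟩

theorem shiftQuadruple_mem {M : ℕ} {p : ℕ × ℕ × ℕ × ℕ × ℕ} (hp : p ∈ shiftParams M) :
    let X := powersOfTwo (3 * M) + powersOfTwo (3 * M)
    shiftQuadruple p ∈ X ×ˢ X ×ˢ X ×ˢ X ∧
      (shiftQuadruple p).1 * (shiftQuadruple p).2.1 =
        (shiftQuadruple p).2.2.1 * (shiftQuadruple p).2.2.2 := by
  obtain ⟨i, j, k, l, t⟩ := p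
  simp only [shiftParams, mem_product, mem_Icc, mem_range] at hp
  simp only [shiftQuadruple, mem_product]
  refine ⟨⟨?_, ?_, ?_, ?_⟩, (pow_add_pow_mul_pow_add_pow_shift 2 ?_ ?_).symm⟩ <;>
    first
    | apply two_pow_add_two_pow_mem_add <;> rw [mem_Icc] <;> omega
    | omega

theorem stmt17_general (N : ℕ) (h3 : 3 ∣ N)
    (A : Finset ℝ) (hA : A = (Finset.Icc 1 N).image fun n => (2:ℝ) ^ n) :
    ((N : ℝ) / 3) ^ 5 ≤ (mulEnergy (A + A) : ℝ) := by
  obtain ⟨M, rfl⟩ := h3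
  have hle : M ^ 5 ≤ _root_.mulEnergy (powersOfTwo (3 * M) + powersOfTwo (3 * M)) :=
    card_shiftParams M ▸ card_le_mulEnergy (fun _ => shiftQuadruple_mem)
      (shiftQuadruple_injOn.mono (coe_shiftParams_subset M))
  calc ((3 * M : ℕ) / 3 : ℝ) ^ 5 = ((M ^ 5 : ℕ) : ℝ) := by push_cast; ring
    _ ≤ _ := hA ▸ Nat.cast_le.mpr hle

theorem stmt17 (N : ℕ) (hN : 0 < N) (h3 : 3 ∣ N)
    (A : Finset ℝ) (hA : A = (Finset.Icc 1 N).image fun n => (2:ℝ) ^ n) :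
    ((N : ℝ) / 3) ^ 5 ≤ (mulEnergy (A + A) : ℝ) :=
  stmt17_general N h3 A hA
end
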